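/- arXiv:2408.08587 — 2 statements merged into one kernel-verified Lean document; each statement's English description precedes it below -/
import Mathlib

section
/- For the dcpo's P₁ and P₂ described in the context, the set A = ↓{(a,a) : a ∈ max B} ⊆ P₁ × P₂ is irreducible in the Scott topology of P₁ × P₂: for any Scott open subsets U, V of the product poset P₁ × P₂, if U ∩ A ≠ ∅ and V ∩ A ≠ ∅ then U ∩ V ∩ A ≠ ∅. -/
/-- A subset `D` is directed with respect to the relation `le`:
it is nonempty and any two elements have an upper bound in `D`. -/
def DirectedOn' {α : Type*} (le : α → α → Prop) (D : Set α) : Prop :=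
  D.Nonempty ∧ ∀ x ∈ D, ∀ y ∈ D, ∃ z ∈ D, le x z ∧ le y z

/-- `u` is a least upper bound of `D` with respect to the relation `le`. -/
def IsLub' {α : Type*} (le : α → α → Prop) (D : Set α) (u : α) : Prop :=
  (∀ x ∈ D, le x u) ∧ ∀ v, (∀ x ∈ D, le x v) → le u v

/-- Every directed subset has a least upper bound: `le` makes the carrier a dcpo. -/
def IsDcpoRel {α : Type*} (le : α → α → Prop) : Prop :=
  ∀ D : Set α, DirectedOn' le D → ∃ u, IsLub' le D u

/-- `U` is Scott open with respect to `le`: it is an upper set and every directed subset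
whose least upper bound lies in `U` meets `U`. -/
def ScottOpen' {α : Type*} (le : α → α → Prop) (U : Set α) : Prop :=
  (∀ x y, le x y → x ∈ U → y ∈ U) ∧
    ∀ D u, DirectedOn' le D → IsLub' le D u → u ∈ U → (D ∩ U).Nonempty

/-- `A` is Scott closed with respect to `le`: it is a lower set and contains the least upper
bounds of its directed subsets. -/
def ScottClosed' {α : Type*} (le : α → α → Prop) (A : Set α) : Prop :=
  (∀ x y, le x y → y ∈ A → x ∈ A) ∧
    ∀ D u, D ⊆ A → DirectedOn' le D → IsLub' le D u → u ∈ A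

/-- Sobriety of the Scott space of `le`: the space is T₀ and every irreducible Scott closed
subset is the Scott closure `↓x = {y | le y x}` of a unique point `x`. -/
def SoberRel {α : Type*} (le : α → α → Prop) : Prop :=
  (∀ x y : α, (∀ U : Set α, ScottOpen' le U → (x ∈ U ↔ y ∈ U)) → x = y) ∧
    ∀ C : Set α, ScottClosed' le C → C.Nonempty →
      (∀ A B : Set α, ScottClosed' le A → ScottClosed' le B → C ⊆ A ∪ B → C ⊆ A ∨ C ⊆ B) →
      ∃! x : α, C = {y | le y x}

/-! ### The posets `M`, `L`, `B`, `P₁`, `P₂` of Miao, Xi, Jia, Li, Zhao -/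

/-- `ℕ^{<ℕ}`: nonempty finite words over `ℕ`. -/
abbrev NWord : Type := {l : List ℕ // l ≠ []}

/-- The prefix order on nonempty finite words. -/
def wordLE (v w : NWord) : Prop := v.1 <+: w.1

/-- The word of length 1 corresponding to a natural number. -/
def word1 (k : ℕ) : NWord := ⟨[k], by simp⟩

/-- `s.k`: the word `s` extended by the letter `k`. -/
def wordSnoc (s : NWord) (k : ℕ) : NWord := ⟨s.1 ++ [k], by simp⟩

/-- The poset `M = ℕ ⊔ ℕ^{<ℕ}`, the disjoint sum of `ℕ` and the words. -/
abbrev Mt : Type := ℕ ⊕ NWord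

/-- The (disjoint sum) order on `M`. -/
def Mle : Mt → Mt → Prop
  | Sum.inl a, Sum.inl b => a ≤ b
  | Sum.inr v, Sum.inr w => wordLE v w
  | _, _ => False

/-- The strict order on `M`. -/
def Mlt (x y : Mt) : Prop := Mle x y ∧ x ≠ y

/-- Pairs `(a, b)` of naturals with `a < b`. -/
abbrev Pairt : Type := {p : ℕ × ℕ // p.1 < p.2}

/-- The poset `L = ({(a,b) : a < b} × M) ∪ {⊤}`; `none` is the top element `⊤` and
`some (p, x)` is the element `x_{a,b}` for `p = (a,b)`. -/
abbrev Lt : Type := Option (Pairt × Mt)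

/-- The strict order on `L`: everything (other than `⊤`) is strictly below `⊤ = none`, and
`x_{a,b} < y_{a,b}` iff `x < y` in `M` (with the same tag `(a,b)`). -/
def Llt (u v : Lt) : Prop :=
  (u ≠ none ∧ v = none) ∨ ∃ p x y, u = some (p, x) ∧ v = some (p, y) ∧ Mlt x y

/-- The carrier of the poset `B = ℕ × ℕ × L`. -/
abbrev Bt : Type := ℕ × ℕ × Lt

/-- `⊏₁`: `(m, n, ℓ) ⊏₁ (m, n, ℓ')` whenever `ℓ < ℓ'` in `L`. -/
def sq1 : Bt → Bt → Prop := fun x y =>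
  ∃ m n u v, x = (m, n, u) ∧ y = (m, n, v) ∧ Llt u v

/-- `⊏₂`: `(a, n, x_{a,b}) ⊏₂ (f_{a,b}(x), n+1, ⊤)` for a word `x ∈ ℕ^{<ℕ}`. -/
def sq2 (f : Pairt → NWord → ℕ) : Bt → Bt → Prop := fun x y =>
  ∃ (n : ℕ) (p : Pairt) (w : NWord),
    x = (p.1.1, n, some (p, Sum.inr w)) ∧ y = (f p w, n + 1, (none : Lt))

/-- `⊏₃`: `(b, n, x_{a,b}) ⊏₃ (f_{a,b}(x), n+1, ⊤)` for `x ∈ ℕ`, regarded as a word of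
length 1. -/
def sq3 (f : Pairt → NWord → ℕ) : Bt → Bt → Prop := fun x y =>
  ∃ (n k : ℕ) (p : Pairt),
    x = (p.1.2, n, some (p, Sum.inl k)) ∧ y = (f p (word1 k), n + 1, (none : Lt))

/-- `⊏₄`: `(f_{a,b}(s), n, x_{a,b}) ⊏₄ (f_{a,b}(s.x), n, ⊤)` for a word `s` and `x ∈ ℕ`. -/
def sq4 (f : Pairt → NWord → ℕ) : Bt → Bt → Prop := fun x y =>
  ∃ (n k : ℕ) (p : Pairt) (s : NWord),
    x = (f p s, n, some (p, Sum.inl k)) ∧ y = (f p (wordSnoc s k), n, (none : Lt))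

/-- `⊏ = ⊏₁ ∪ ⊏₂ ∪ ⊏₃ ∪ ⊏₄ ∪ ⊏₁;⊏₂ ∪ ⊏₁;⊏₃ ∪ ⊏₁;⊏₄`. -/
def Bsq (f : Pairt → NWord → ℕ) : Bt → Bt → Prop := fun x y =>
  sq1 x y ∨ sq2 f x y ∨ sq3 f x y ∨ sq4 f x y ∨
    (∃ z, sq1 x z ∧ sq2 f z y) ∨ (∃ z, sq1 x z ∧ sq3 f z y) ∨ (∃ z, sq1 x z ∧ sq4 f z y)

/-- The order `⊑` on `B`: the reflexive closure of `⊏`. -/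
def Ble (f : Pairt → NWord → ℕ) (x y : Bt) : Prop := x = y ∨ Bsq f x y

/-- The hypotheses on the data `i`, `f`: `i` is an injection into `P(ℕ)` with pairwise
disjoint values satisfying `n < k` for all `k ∈ i (m, n)`, and each `f_{a,b}` is a monotone
injection of `ℕ^{<ℕ}` (with the prefix order) into `i (a, b)`. -/
structure IFData (i : Pairt → Set ℕ) (f : Pairt → NWord → ℕ) : Prop where
  inj : Function.Injective i
  disj : ∀ p q : Pairt, p ≠ q → i p ∩ i q = ∅
  gt : ∀ p : Pairt, ∀ k ∈ i p, p.1.2 < k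
  mem : ∀ p w, f p w ∈ i p
  finj : ∀ p, Function.Injective (f p)
  fmono : ∀ p v w, wordLE v w → f p v ≤ f p w

/-- The carrier of the poset `P₁ = (ℕ^ℕ × ℕ) ∪ B ∪ {⊤₁}`. -/
abbrev P1t : Type := ((ℕ → ℕ) × ℕ) ⊕ Bt ⊕ Unit

/-- The top element `⊤₁` of `P₁`. -/
def P1top : P1t := Sum.inr (Sum.inr ())

/-- The inclusion of `B` into `P₁`. -/
def P1ofB (b : Bt) : P1t := Sum.inr (Sum.inl b)

/-- The strict order `<₁ ∪ <₂ ∪ <₃ ∪ <₄ ∪ <₁;<₃` of `P₁`: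
`(g, n) <₁ (g, m)` iff `n < m`; `<₂` is `⊏` on `B`; `(g, n) <₃ (g(n), n, ⊤)`;
`x <₄ ⊤₁` for `x ≠ ⊤₁`; and `(g, n) <₁;<₃ (g(m), m, ⊤)` for `n < m`. -/
def P1lt (f : Pairt → NWord → ℕ) : P1t → P1t → Prop := fun x y =>
  (∃ (g : ℕ → ℕ) (n m : ℕ), x = Sum.inl (g, n) ∧ y = Sum.inl (g, m) ∧ n < m) ∨
  (∃ b c : Bt, x = P1ofB b ∧ y = P1ofB c ∧ Bsq f b c) ∨
  (∃ (g : ℕ → ℕ) (n : ℕ), x = Sum.inl (g, n) ∧ y = P1ofB (g n, n, (none : Lt))) ∨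
  (x ≠ P1top ∧ y = P1top) ∨
  (∃ (g : ℕ → ℕ) (n m : ℕ), x = Sum.inl (g, n) ∧ n < m ∧ y = P1ofB (g m, m, (none : Lt)))

/-- The order of `P₁`: the reflexive closure of the strict order. -/
def P1le (f : Pairt → NWord → ℕ) (x y : P1t) : Prop := x = y ∨ P1lt f x y

/-- `X = {g : ℕ → ⋃ₙ Eₙ : g(n) ∈ Eₙ}` where `Eₙ = i(φ(n))`. -/
def Xt (i : Pairt → Set ℕ) (φ : ℕ → Pairt) : Type := {g : ℕ → ℕ // ∀ n, g n ∈ i (φ n)}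

/-- The carrier of the poset `P₂ = (X × ℕ × ℕ) ∪ B ∪ {⊤₂}`. -/
abbrev P2t (i : Pairt → Set ℕ) (φ : ℕ → Pairt) : Type := (Xt i φ × ℕ × ℕ) ⊕ Bt ⊕ Unit

/-- The top element `⊤₂` of `P₂`. -/
def P2top (i : Pairt → Set ℕ) (φ : ℕ → Pairt) : P2t i φ := Sum.inr (Sum.inr ())

/-- The inclusion of `B` into `P₂`. -/
def P2ofB (i : Pairt → Set ℕ) (φ : ℕ → Pairt) (b : Bt) : P2t i φ := Sum.inr (Sum.inl b)

/-- The strict order `<₁ ∪ <₂ ∪ <₃ ∪ <₄ ∪ <₁;<₃` of `P₂`: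
`(g, n, k) <₁ (g, m, k)` iff `n < m`; `<₂` is `⊏` on `B`; `(g, n, k) <₃ (g(n), k, ⊤)`;
`x <₄ ⊤₂` for `x ≠ ⊤₂`; and `(g, n, k) <₁;<₃ (g(m), k, ⊤)` for `n < m`. -/
def P2lt (i : Pairt → Set ℕ) (φ : ℕ → Pairt) (f : Pairt → NWord → ℕ) :
    P2t i φ → P2t i φ → Prop := fun x y =>
  (∃ (g : Xt i φ) (n m k : ℕ), x = Sum.inl (g, n, k) ∧ y = Sum.inl (g, m, k) ∧ n < m) ∨
  (∃ b c : Bt, x = P2ofB i φ b ∧ y = P2ofB i φ c ∧ Bsq f b c) ∨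
  (∃ (g : Xt i φ) (n k : ℕ), x = Sum.inl (g, n, k) ∧ y = P2ofB i φ (g.1 n, k, (none : Lt))) ∨
  (x ≠ P2top i φ ∧ y = P2top i φ) ∨
  (∃ (g : Xt i φ) (n m k : ℕ), x = Sum.inl (g, n, k) ∧ n < m ∧
    y = P2ofB i φ (g.1 m, k, (none : Lt)))

/-- The order of `P₂`: the reflexive closure of the strict order. -/
def P2le (i : Pairt → Set ℕ) (φ : ℕ → Pairt) (f : Pairt → NWord → ℕ) (x y : P2t i φ) : Prop :=
  x = y ∨ P2lt i φ f x y

/-- The componentwise order on the product poset `P₁ × P₂`. -/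
def prodLe (i : Pairt → Set ℕ) (φ : ℕ → Pairt) (f : Pairt → NWord → ℕ)
    (x y : P1t × P2t i φ) : Prop :=
  P1le f x.1 y.1 ∧ P2le i φ f x.2 y.2

/-- `max B`: the set of maximal elements of the poset `B`. -/
def maxB (f : Pairt → NWord → ℕ) : Set Bt := {b : Bt | ∀ c : Bt, Ble f b c → b = c}

/-- The set `A = ↓{(a, a) : a ∈ max B} ⊆ P₁ × P₂`: the lower set, in the product order,
generated by the diagonal copies of the maximal elements of `B`. -/
def Adiag (i : Pairt → Set ℕ) (φ : ℕ → Pairt) (f : Pairt → NWord → ℕ) :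
    Set (P1t × P2t i φ) :=
  {q : P1t × P2t i φ | ∃ b ∈ maxB f, prodLe i φ f q (P1ofB b, P2ofB i φ b)}

namespace AdiagAux

variable {i : Pairt → Set ℕ} {φ : ℕ → Pairt} {f : Pairt → NWord → ℕ}

/-- prefix of `σ` of length `r+1` -/
def pref (σ : ℕ → ℕ) (r : ℕ) : NWord := ⟨(List.range (r+1)).map σ, by simp⟩

lemma pref_length (σ : ℕ → ℕ) (r : ℕ) : (pref σ r).1.length = r + 1 := by simp [pref]

lemma pref_le (σ : ℕ → ℕ) {r r' : ℕ} (h : r ≤ r') : wordLE (pref σ r) (pref σ r') := by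
  show (List.range (r+1)).map σ <+: (List.range (r'+1)).map σ
  have h1 : List.range (r+1) = (List.range (r'+1)).take (r+1) := by
    rw [List.take_range, min_eq_left (by omega)]
  rw [h1, List.map_take]
  exact List.take_prefix _ _

lemma Mle_inl_iff {a : ℕ} {y : Mt} : Mle (Sum.inl a) y ↔ ∃ b, y = Sum.inl b ∧ a ≤ b := by
  cases y with
  | inl b => simp [Mle]
  | inr w => simp [Mle]

lemma Mle_inr_iff {w : NWord} {y : Mt} : Mle (Sum.inr w) y ↔ ∃ v, y = Sum.inr v ∧ wordLE w v := by
  cases y with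
  | inl b => simp [Mle]
  | inr v => simp [Mle]


lemma Bsq_of_Llt {m n : ℕ} {u v : Lt} (h : Llt u v) : Bsq f (m,n,u) (m,n,v) :=
  Or.inl ⟨m, n, u, v, rfl, rfl, h⟩

lemma Llt_to_none (x : Pairt × Mt) : Llt (some x) none := Or.inl ⟨by simp, rfl⟩

lemma Bsq_to_none (m n : ℕ) (x : Pairt × Mt) : Bsq f (m,n,some x) (m,n,none) :=
  Bsq_of_Llt (Llt_to_none x)

lemma Ble_inl_chain {m n : ℕ} {p : Pairt} {k j : ℕ} (h : k ≤ j) :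
    Ble f (m, n, some (p, Sum.inl k)) (m, n, some (p, Sum.inl j)) := by
  rcases eq_or_lt_of_le h with rfl | h
  · exact Or.inl rfl
  · refine Or.inr (Bsq_of_Llt (Or.inr ⟨p, _, _, rfl, rfl, ?_, ?_⟩))
    · show k ≤ j; omega
    · simp; omega

lemma Ble_pref_chain (σ : ℕ → ℕ) {m n : ℕ} {p : Pairt} {r r' : ℕ} (h : r ≤ r') :
    Ble f (m, n, some (p, Sum.inr (pref σ r))) (m, n, some (p, Sum.inr (pref σ r'))) := by
  rcases eq_or_lt_of_le h with rfl | h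
  · exact Or.inl rfl
  · refine Or.inr (Bsq_of_Llt (Or.inr ⟨p, _, _, rfl, rfl, pref_le σ h.le, ?_⟩))
    intro hEq
    have h2 : (pref σ r).1.length = (pref σ r').1.length := by
      rw [Sum.inr.injEq] at hEq; rw [hEq]
    simp only [pref_length] at h2; omega

lemma sq1_inv_none {m n : ℕ} {d : Bt} (h : sq1 (m, n, (none : Lt)) d) : False := by
  obtain ⟨m', n', u, v, h1, h2, hlt⟩ := h
  obtain ⟨rfl, rfl, rfl⟩ : m = m' ∧ n = n' ∧ (none : Lt) = u := by
    simpa [Prod.ext_iff] using h1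
  rcases hlt with ⟨hne, _⟩ | ⟨q, x, y, hu, _, _⟩
  · exact hne rfl
  · cases hu

lemma sq2_inv_none {m n : ℕ} {d : Bt} (h : sq2 f (m, n, (none : Lt)) d) : False := by
  obtain ⟨n', q, w, h1, _⟩ := h
  simp [Prod.ext_iff] at h1

lemma sq3_inv_none {m n : ℕ} {d : Bt} (h : sq3 f (m, n, (none : Lt)) d) : False := by
  obtain ⟨n', k', q, h1, _⟩ := h
  simp [Prod.ext_iff] at h1

lemma sq4_inv_none {m n : ℕ} {d : Bt} (h : sq4 f (m, n, (none : Lt)) d) : False := by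
  obtain ⟨n', k', q, s, h1, _⟩ := h
  simp [Prod.ext_iff] at h1

lemma Bsq_none_false {m n : ℕ} {d : Bt} (h : Bsq f (m, n, (none : Lt)) d) : False := by
  rcases h with h | h | h | h | ⟨z, h, _⟩ | ⟨z, h, _⟩ | ⟨z, h, _⟩
  · exact sq1_inv_none h
  · exact sq2_inv_none h
  · exact sq3_inv_none h
  · exact sq4_inv_none h
  · exact sq1_inv_none h
  · exact sq1_inv_none h
  · exact sq1_inv_none h

lemma sq1_inv_inl {m n k : ℕ} {p : Pairt} {d : Bt}
    (h : sq1 (m, n, some (p, Sum.inl k)) d) :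
    d = (m, n, none) ∨ ∃ j, k < j ∧ d = (m, n, some (p, Sum.inl j)) := by
  obtain ⟨m', n', u, v, h1, rfl, hlt⟩ := h
  obtain ⟨rfl, rfl, rfl⟩ : m = m' ∧ n = n' ∧ some (p, Sum.inl k) = u := by
    simpa [Prod.ext_iff] using h1
  rcases hlt with ⟨_, rfl⟩ | ⟨q, x, y, hu, rfl, hxy⟩
  · exact Or.inl rfl
  · obtain ⟨rfl, rfl⟩ : p = q ∧ Sum.inl k = x := by simpa using hu
    obtain ⟨hle, hne⟩ := hxy
    rcases Mle_inl_iff.1 hle with ⟨j, rfl, hj⟩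
    refine Or.inr ⟨j, lt_of_le_of_ne hj ?_, rfl⟩
    rintro rfl; exact hne rfl

lemma sq2_inv_inl {m n k : ℕ} {p : Pairt} {d : Bt}
    (h : sq2 f (m, n, some (p, Sum.inl k)) d) : False := by
  obtain ⟨n', q, w, h1, _⟩ := h
  simp [Prod.ext_iff] at h1

lemma sq3_inv_inl {m n k : ℕ} {p : Pairt} {d : Bt}
    (h : sq3 f (m, n, some (p, Sum.inl k)) d) :
    m = p.1.2 ∧ d = (f p (word1 k), n + 1, (none : Lt)) := by
  obtain ⟨n', k', q, h1, rfl⟩ := h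
  obtain ⟨h2, rfl, rfl, rfl⟩ : m = q.1.2 ∧ n = n' ∧ p = q ∧ k = k' := by
    simpa [Prod.ext_iff] using h1
  exact ⟨h2, rfl⟩

lemma sq4_inv_inl {m n k : ℕ} {p : Pairt} {d : Bt}
    (h : sq4 f (m, n, some (p, Sum.inl k)) d) :
    ∃ s, m = f p s ∧ d = (f p (wordSnoc s k), n, (none : Lt)) := by
  obtain ⟨n', k', q, s, h1, rfl⟩ := h
  obtain ⟨h2, rfl, rfl, rfl⟩ : m = f q s ∧ n = n' ∧ p = q ∧ k = k' := by
    simpa [Prod.ext_iff] using h1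
  exact ⟨s, h2, rfl⟩

lemma Bsq_inv_inl {m n k : ℕ} {p : Pairt} {d : Bt}
    (h : Bsq f (m, n, some (p, Sum.inl k)) d) :
    d = (m, n, none) ∨
    (∃ j, k < j ∧ d = (m, n, some (p, Sum.inl j))) ∨
    (m = p.1.2 ∧ ∃ j, k ≤ j ∧ d = (f p (word1 j), n + 1, (none : Lt))) ∨
    (∃ s j, m = f p s ∧ k ≤ j ∧ d = (f p (wordSnoc s j), n, (none : Lt))) := by
  rcases h with h | h | h | h | ⟨z, h, h'⟩ | ⟨z, h, h'⟩ | ⟨z, h, h'⟩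
  · rcases sq1_inv_inl h with h | ⟨j, hj, rfl⟩
    · exact Or.inl h
    · exact Or.inr (Or.inl ⟨j, hj, rfl⟩)
  · exact absurd h sq2_inv_inl
  · obtain ⟨h1, rfl⟩ := sq3_inv_inl h
    exact Or.inr (Or.inr (Or.inl ⟨h1, k, le_rfl, rfl⟩))
  · obtain ⟨s, h1, rfl⟩ := sq4_inv_inl h
    exact Or.inr (Or.inr (Or.inr ⟨s, k, h1, le_rfl, rfl⟩))
  · rcases sq1_inv_inl h with rfl | ⟨j, hj, rfl⟩
    · exact absurd h' (fun hh => sq2_inv_none hh)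
    · exact absurd h' sq2_inv_inl
  · rcases sq1_inv_inl h with rfl | ⟨j, hj, rfl⟩
    · exact absurd h' (fun hh => sq3_inv_none hh)
    · obtain ⟨h1, rfl⟩ := sq3_inv_inl h'
      exact Or.inr (Or.inr (Or.inl ⟨h1, j, hj.le, rfl⟩))
  · rcases sq1_inv_inl h with rfl | ⟨j, hj, rfl⟩
    · exact absurd h' (fun hh => sq4_inv_none hh)
    · obtain ⟨s, h1, rfl⟩ := sq4_inv_inl h'
      exact Or.inr (Or.inr (Or.inr ⟨s, j, h1, hj.le, rfl⟩))

lemma sq1_inv_inr {m n : ℕ} {w : NWord} {p : Pairt} {d : Bt}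
    (h : sq1 (m, n, some (p, Sum.inr w)) d) :
    d = (m, n, none) ∨ ∃ v, wordLE w v ∧ w ≠ v ∧ d = (m, n, some (p, Sum.inr v)) := by
  obtain ⟨m', n', u, v, h1, rfl, hlt⟩ := h
  obtain ⟨rfl, rfl, rfl⟩ : m = m' ∧ n = n' ∧ some (p, Sum.inr w) = u := by
    simpa [Prod.ext_iff] using h1
  rcases hlt with ⟨_, rfl⟩ | ⟨q, x, y, hu, rfl, hxy⟩
  · exact Or.inl rfl
  · obtain ⟨rfl, rfl⟩ : p = q ∧ Sum.inr w = x := by simpa using hu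
    obtain ⟨hle, hne⟩ := hxy
    rcases Mle_inr_iff.1 hle with ⟨v, rfl, hv⟩
    refine Or.inr ⟨v, hv, ?_, rfl⟩
    rintro rfl; exact hne rfl

lemma sq2_inv_inr {m n : ℕ} {w : NWord} {p : Pairt} {d : Bt}
    (h : sq2 f (m, n, some (p, Sum.inr w)) d) :
    m = p.1.1 ∧ d = (f p w, n + 1, (none : Lt)) := by
  obtain ⟨n', q, w', h1, rfl⟩ := h
  obtain ⟨h2, rfl, rfl, rfl⟩ : m = q.1.1 ∧ n = n' ∧ p = q ∧ w = w' := by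
    simpa [Prod.ext_iff] using h1
  exact ⟨h2, rfl⟩

lemma sq3_inv_inr {m n : ℕ} {w : NWord} {p : Pairt} {d : Bt}
    (h : sq3 f (m, n, some (p, Sum.inr w)) d) : False := by
  obtain ⟨n', k', q, h1, _⟩ := h
  simp [Prod.ext_iff] at h1

lemma sq4_inv_inr {m n : ℕ} {w : NWord} {p : Pairt} {d : Bt}
    (h : sq4 f (m, n, some (p, Sum.inr w)) d) : False := by
  obtain ⟨n', k', q, s, h1, _⟩ := h
  simp [Prod.ext_iff] at h1

lemma Bsq_inv_inr {m n : ℕ} {w : NWord} {p : Pairt} {d : Bt}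
    (h : Bsq f (m, n, some (p, Sum.inr w)) d) :
    d = (m, n, none) ∨
    (∃ v, wordLE w v ∧ w ≠ v ∧ d = (m, n, some (p, Sum.inr v))) ∨
    (m = p.1.1 ∧ ∃ v, wordLE w v ∧ d = (f p v, n + 1, (none : Lt))) := by
  rcases h with h | h | h | h | ⟨z, h, h'⟩ | ⟨z, h, h'⟩ | ⟨z, h, h'⟩
  · rcases sq1_inv_inr h with h | ⟨v, h1, h2, rfl⟩
    · exact Or.inl h
    · exact Or.inr (Or.inl ⟨v, h1, h2, rfl⟩)
  · obtain ⟨h1, rfl⟩ := sq2_inv_inr h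
    exact Or.inr (Or.inr ⟨h1, w, List.prefix_rfl, rfl⟩)
  · exact absurd h sq3_inv_inr
  · exact absurd h sq4_inv_inr
  · rcases sq1_inv_inr h with rfl | ⟨v, h1, h2, rfl⟩
    · exact absurd h' (fun hh => sq2_inv_none hh)
    · obtain ⟨h3, rfl⟩ := sq2_inv_inr h'
      exact Or.inr (Or.inr ⟨h3, v, h1, rfl⟩)
  · rcases sq1_inv_inr h with rfl | ⟨v, h1, h2, rfl⟩
    · exact absurd h' (fun hh => sq3_inv_none hh)
    · exact absurd h' sq3_inv_inr
  · rcases sq1_inv_inr h with rfl | ⟨v, h1, h2, rfl⟩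
    · exact absurd h' (fun hh => sq4_inv_none hh)
    · exact absurd h' sq4_inv_inr

lemma word1_inj {a b : ℕ} (h : word1 a = word1 b) : a = b := by
  simpa [word1] using congrArg Subtype.val h

lemma wordSnoc_inj_right {s : NWord} {a b : ℕ} (h : wordSnoc s a = wordSnoc s b) : a = b := by
  have := congrArg Subtype.val h
  simpa [wordSnoc] using this

lemma wordSnoc_ne {s : NWord} {a : ℕ} (h : wordSnoc s a = s) : False := by
  have := congrArg (fun w : NWord => w.1.length) h
  simp [wordSnoc] at this

lemma Bub_inl (hif : IFData i f) {m n : ℕ} {p : Pairt} {d : Bt}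
    (h : ∀ k, Ble f (m, n, some (p, Sum.inl k)) d) : d = (m, n, none) := by
  by_contra hne
  have hB : ∀ k, Bsq f (m, n, some (p, Sum.inl k)) d := by
    intro k
    rcases h k with he | hb
    · exfalso
      rcases h (k+1) with he' | hb'
      · rw [← he] at he'
        obtain ⟨-, -, h3⟩ : m = m ∧ n = n ∧
            (some (p, Sum.inl (k+1)) : Lt) = some (p, Sum.inl k) := by
          simpa [Prod.ext_iff] using he'
        simp at h3
      · rw [← he] at hb'
        rcases Bsq_inv_inl hb' with h1 | ⟨j, hj, h1⟩ | ⟨-, j, -, h1⟩ | ⟨s, j, -, -, h1⟩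
        · simp [Prod.ext_iff] at h1
        · obtain ⟨-, -, h3⟩ : m = m ∧ n = n ∧ (some (p, Sum.inl k) : Lt) =
              some (p, Sum.inl j) := by simpa [Prod.ext_iff] using h1
          obtain rfl : k = j := by simpa using h3
          omega
        · simp [Prod.ext_iff] at h1
        · simp [Prod.ext_iff] at h1
    · exact hb
  rcases Bsq_inv_inl (hB 0) with h0 | ⟨j, hj, rfl⟩ | ⟨hm, j0, -, rfl⟩ | ⟨s, j0, hs, -, rfl⟩
  · exact hne h0
  · rcases Bsq_inv_inl (hB (j+1)) with h1 | ⟨j', hj', h1⟩ | ⟨-, j', -, h1⟩ | ⟨s, j', -, -, h1⟩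
    · simp [Prod.ext_iff] at h1
    · obtain ⟨-, -, h3⟩ : m = m ∧ n = n ∧ (some (p, Sum.inl j) : Lt) =
          some (p, Sum.inl j') := by simpa [Prod.ext_iff] using h1
      obtain rfl : j = j' := by simpa using h3
      omega
    · simp [Prod.ext_iff] at h1
    · simp [Prod.ext_iff] at h1
  · rcases Bsq_inv_inl (hB (j0+1)) with h1 | ⟨j', hj', h1⟩ | ⟨-, j', hj', h1⟩ |
        ⟨s, j', -, -, h1⟩
    · simp [Prod.ext_iff] at h1
    · simp [Prod.ext_iff] at h1
    · obtain ⟨h3, -⟩ : f p (word1 j0) = f p (word1 j') ∧ (n+1 = n+1 ∧ True) := by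
        simpa [Prod.ext_iff] using h1
      have := word1_inj (hif.finj p h3)
      omega
    · simp [Prod.ext_iff] at h1
  · rcases Bsq_inv_inl (hB (j0+1)) with h1 | ⟨j', hj', h1⟩ | ⟨-, j', hj', h1⟩ |
        ⟨s', j', hs', hj', h1⟩
    · obtain h3 : f p (wordSnoc s j0) = m := by
        have := h1
        simp only [Prod.ext_iff] at this
        exact this.1
      rw [hs] at h3
      exact wordSnoc_ne (hif.finj p h3)
    · simp [Prod.ext_iff] at h1
    · simp [Prod.ext_iff] at h1
    · have hss : s' = s := hif.finj p (hs'.symm.trans hs)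
      subst hss
      obtain ⟨h3, -⟩ : f p (wordSnoc s' j0) = f p (wordSnoc s' j') ∧ (n = n ∧ True) := by
        simpa [Prod.ext_iff] using h1
      have := wordSnoc_inj_right (hif.finj p h3)
      omega

lemma Bub_inr (hif : IFData i f) (σ : ℕ → ℕ) {m n : ℕ} {p : Pairt} {d : Bt}
    (h : ∀ r, Ble f (m, n, some (p, Sum.inr (pref σ r))) d) : d = (m, n, none) := by
  by_contra hne
  have hB : ∀ r, Bsq f (m, n, some (p, Sum.inr (pref σ r))) d := by
    intro r
    rcases h r with he | hb
    · exfalso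
      rcases h (r+1) with he' | hb'
      · rw [← he] at he'
        obtain ⟨-, -, h3⟩ : m = m ∧ n = n ∧
            (some (p, Sum.inr (pref σ (r+1))) : Lt) = some (p, Sum.inr (pref σ r)) := by
          simpa [Prod.ext_iff] using he'
        obtain h4 : pref σ (r+1) = pref σ r := by simpa using h3
        have := congrArg (fun w : NWord => w.1.length) h4
        simp [pref_length] at this
      · rw [← he] at hb'
        rcases Bsq_inv_inr hb' with h1 | ⟨v, hv1, hv2, h1⟩ | ⟨-, v, hv1, h1⟩
        · simp [Prod.ext_iff] at h1
        · obtain ⟨-, -, h3⟩ : m = m ∧ n = n ∧ (some (p, Sum.inr (pref σ r)) : Lt) =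
              some (p, Sum.inr v) := by simpa [Prod.ext_iff] using h1
          obtain rfl : pref σ r = v := by simpa using h3
          have := hv1.length_le
          simp [pref_length] at this
        · simp [Prod.ext_iff] at h1
    · exact hb
  rcases Bsq_inv_inr (hB 0) with h0 | ⟨v, hv1, hv2, rfl⟩ | ⟨hm, v0, hv0, rfl⟩
  · exact hne h0
  · rcases Bsq_inv_inr (hB v.1.length) with h1 | ⟨v', hv1', hv2', h1⟩ | ⟨-, v', hv1', h1⟩
    · simp [Prod.ext_iff] at h1
    · obtain ⟨-, -, h3⟩ : m = m ∧ n = n ∧ (some (p, Sum.inr v) : Lt) =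
          some (p, Sum.inr v') := by simpa [Prod.ext_iff] using h1
      obtain rfl : v = v' := by simpa using h3
      have := hv1'.length_le
      simp [pref_length] at this
    · simp [Prod.ext_iff] at h1
  · rcases Bsq_inv_inr (hB v0.1.length) with h1 | ⟨v', hv1', hv2', h1⟩ | ⟨-, v', hv1', h1⟩
    · simp [Prod.ext_iff] at h1
    · simp [Prod.ext_iff] at h1
    · obtain ⟨h3, -⟩ : f p v0 = f p v' ∧ (n + 1 = n + 1 ∧ True) := by
        simpa [Prod.ext_iff] using h1
      obtain rfl : v0 = v' := hif.finj p h3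
      have := hv1'.length_le
      simp [pref_length] at this

lemma none_mem_maxB (m n : ℕ) : ((m, n, none) : Bt) ∈ maxB f := by
  intro c hc
  rcases hc with rfl | hb
  · rfl
  · exact absurd hb Bsq_none_false

lemma maxB_shape {a : Bt} (ha : a ∈ maxB f) : ∃ m n, a = (m, n, (none : Lt)) := by
  obtain ⟨m, n, ℓ⟩ := a
  cases ℓ with
  | none => exact ⟨m, n, rfl⟩
  | some x =>
    have := ha (m, n, none) (Or.inr (Bsq_to_none m n x))
    simp [Prod.ext_iff] at this

/-- The diagonal embedding of `B` into `P₁ × P₂`. -/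
def dd (i : Pairt → Set ℕ) (φ : ℕ → Pairt) (b : Bt) : P1t × P2t i φ :=
  (P1ofB b, P2ofB i φ b)

lemma P1ofB_ne_top (b : Bt) : P1ofB b ≠ P1top := by simp [P1ofB, P1top]

lemma P1le_ofB {b c : Bt} (h : Ble f b c) : P1le f (P1ofB b) (P1ofB c) := by
  rcases h with rfl | hb
  · exact Or.inl rfl
  · exact Or.inr (Or.inr (Or.inl ⟨b, c, rfl, rfl, hb⟩))

lemma P2le_ofB {b c : Bt} (h : Ble f b c) : P2le i φ f (P2ofB i φ b) (P2ofB i φ c) := by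
  rcases h with rfl | hb
  · exact Or.inl rfl
  · exact Or.inr (Or.inr (Or.inl ⟨b, c, rfl, rfl, hb⟩))

lemma prodLe_dd {b c : Bt} (h : Ble f b c) : prodLe i φ f (dd i φ b) (dd i φ c) :=
  ⟨P1le_ofB h, P2le_ofB h⟩

lemma prodLe_dd_sq {b c : Bt} (h : Bsq f b c) : prodLe i φ f (dd i φ b) (dd i φ c) :=
  prodLe_dd (Or.inr h)

lemma prodLe_refl (z : P1t × P2t i φ) : prodLe i φ f z z := ⟨Or.inl rfl, Or.inl rfl⟩

lemma P1le_ofB_inv {b : Bt} {y : P1t} (h : P1le f (P1ofB b) y) :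
    y = P1top ∨ ∃ c, y = P1ofB c ∧ Ble f b c := by
  rcases h with rfl | h
  · exact Or.inr ⟨b, rfl, Or.inl rfl⟩
  · rcases h with ⟨g, n, m', h1, -, -⟩ | ⟨b', c, h1, rfl, hb⟩ | ⟨g, n, h1, -⟩ |
      ⟨-, rfl⟩ | ⟨g, n, m', h1, -, -⟩
    · exact absurd h1 (by simp [P1ofB])
    · obtain rfl : b = b' := by simpa [P1ofB] using h1
      exact Or.inr ⟨c, rfl, Or.inr hb⟩
    · exact absurd h1 (by simp [P1ofB])
    · exact Or.inl rfl
    · exact absurd h1 (by simp [P1ofB])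

lemma P2le_ofB_inv {b : Bt} {y : P2t i φ} (h : P2le i φ f (P2ofB i φ b) y) :
    y = P2top i φ ∨ ∃ c, y = P2ofB i φ c ∧ Ble f b c := by
  rcases h with rfl | h
  · exact Or.inr ⟨b, rfl, Or.inl rfl⟩
  · rcases h with ⟨g, n, m', k, h1, -, -⟩ | ⟨b', c, h1, rfl, hb⟩ | ⟨g, n, k, h1, -⟩ |
      ⟨-, rfl⟩ | ⟨g, n, m', k, h1, -, -⟩
    · exact absurd h1 (by simp [P2ofB])
    · obtain rfl : b = b' := by simpa [P2ofB] using h1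
      exact Or.inr ⟨c, rfl, Or.inr hb⟩
    · exact absurd h1 (by simp [P2ofB])
    · exact Or.inl rfl
    · exact absurd h1 (by simp [P2ofB])

lemma P1le_ofB_top (b : Bt) : P1le f (P1ofB b) P1top :=
  Or.inr (Or.inr (Or.inr (Or.inr (Or.inl ⟨P1ofB_ne_top b, rfl⟩))))

lemma P2le_ofB_top (b : Bt) : P2le i φ f (P2ofB i φ b) (P2top i φ) :=
  Or.inr (Or.inr (Or.inr (Or.inr (Or.inl ⟨by simp [P2ofB, P2top], rfl⟩))))

lemma dd_isLub {c : ℕ → Bt} {t : Bt}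
    (hub : ∀ k, Ble f (c k) t) (hleast : ∀ d, (∀ k, Ble f (c k) d) → d = t) :
    IsLub' (prodLe i φ f) (Set.range fun k => dd i φ (c k)) (dd i φ t) := by
  constructor
  · rintro x ⟨k, rfl⟩
    exact prodLe_dd (hub k)
  · rintro ⟨v1, v2⟩ hv
    constructor
    · have h1 : ∀ k, P1le f (P1ofB (c k)) v1 := fun k => (hv _ ⟨k, rfl⟩).1
      rcases P1le_ofB_inv (h1 0) with rfl | ⟨d, rfl, -⟩
      · exact P1le_ofB_top t
      · have hd : ∀ k, Ble f (c k) d := by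
          intro k
          rcases P1le_ofB_inv (h1 k) with h | ⟨d', hd', hb⟩
          · exact absurd h (P1ofB_ne_top d)
          · obtain rfl : d = d' := by simpa [P1ofB] using hd'
            exact hb
        rw [hleast d hd]
        exact Or.inl rfl
    · have h2 : ∀ k, P2le i φ f (P2ofB i φ (c k)) v2 := fun k => (hv _ ⟨k, rfl⟩).2
      rcases P2le_ofB_inv (h2 0) with rfl | ⟨d, rfl, -⟩
      · exact P2le_ofB_top t
      · have hd : ∀ k, Ble f (c k) d := by
          intro k
          rcases P2le_ofB_inv (h2 k) with h | ⟨d', hd', hb⟩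
          · exact absurd h (by simp [P2ofB, P2top])
          · obtain rfl : d = d' := by simpa [P2ofB] using hd'
            exact hb
        rw [hleast d hd]
        exact Or.inl rfl

lemma dd_directed {c : ℕ → Bt} (hmono : ∀ {k j}, k ≤ j → Ble f (c k) (c j)) :
    DirectedOn' (prodLe i φ f) (Set.range fun k => dd i φ (c k)) := by
  refine ⟨⟨dd i φ (c 0), ⟨0, rfl⟩⟩, ?_⟩
  rintro x ⟨k, rfl⟩ y ⟨j, rfl⟩
  exact ⟨dd i φ (c (max k j)), ⟨max k j, rfl⟩, prodLe_dd (hmono (le_max_left k j)),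
    prodLe_dd (hmono (le_max_right k j))⟩

lemma stepInl {U : Set (P1t × P2t i φ)} (hU : ScottOpen' (prodLe i φ f) U)
    (hif : IFData i f) {m n : ℕ} (p : Pairt) (h : dd i φ (m, n, (none : Lt)) ∈ U) :
    ∃ K, ∀ k ≥ K, dd i φ (m, n, some (p, Sum.inl k)) ∈ U := by
  have hdir := dd_directed (i := i) (φ := φ) (f := f)
      (c := fun k => (m, n, some (p, Sum.inl k))) (fun hkj => Ble_inl_chain hkj)
  have hlub := dd_isLub (i := i) (φ := φ) (f := f) (c := fun k => (m, n, some (p, Sum.inl k)))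
      (t := (m, n, none)) (fun k => Or.inr (Bsq_to_none m n _))
      (fun d hd => Bub_inl hif hd)
  obtain ⟨x, ⟨k0, rfl⟩, hxU⟩ := hU.2 _ _ hdir hlub h
  exact ⟨k0, fun k hk => hU.1 _ _ (prodLe_dd (Ble_inl_chain hk)) hxU⟩

lemma stepInr {U : Set (P1t × P2t i φ)} (hU : ScottOpen' (prodLe i φ f) U)
    (hif : IFData i f) {m n : ℕ} (p : Pairt) (σ : ℕ → ℕ)
    (h : dd i φ (m, n, (none : Lt)) ∈ U) :
    ∃ r, dd i φ (m, n, some (p, Sum.inr (pref σ r))) ∈ U := by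
  have hdir := dd_directed (i := i) (φ := φ) (f := f)
      (c := fun r => (m, n, some (p, Sum.inr (pref σ r)))) (fun hkj => Ble_pref_chain σ hkj)
  have hlub := dd_isLub (i := i) (φ := φ) (f := f)
      (c := fun r => (m, n, some (p, Sum.inr (pref σ r))))
      (t := (m, n, none)) (fun r => Or.inr (Bsq_to_none m n _))
      (fun d hd => Bub_inr hif σ hd)
  obtain ⟨x, ⟨r, rfl⟩, hxU⟩ := hU.2 _ _ hdir hlub h
  exact ⟨r, hxU⟩

lemma Bsq_sq2 (n : ℕ) (p : Pairt) (w : NWord) :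
    Bsq f (p.1.1, n, some (p, Sum.inr w)) (f p w, n + 1, (none : Lt)) :=
  Or.inr (Or.inl ⟨n, p, w, rfl, rfl⟩)

lemma Bsq_sq3 (n k : ℕ) (p : Pairt) :
    Bsq f (p.1.2, n, some (p, Sum.inl k)) (f p (word1 k), n + 1, (none : Lt)) :=
  Or.inr (Or.inr (Or.inl ⟨n, k, p, rfl, rfl⟩))

lemma Bsq_sq4 (n k : ℕ) (p : Pairt) (s : NWord) :
    Bsq f (f p s, n, some (p, Sum.inl k)) (f p (wordSnoc s k), n, (none : Lt)) :=
  Or.inr (Or.inr (Or.inr (Or.inl ⟨n, k, p, s, rfl, rfl⟩)))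

lemma toInl {U : Set (P1t × P2t i φ)} (hU : ScottOpen' (prodLe i φ f) U)
    (hif : IFData i f) {n : ℕ} (p : Pairt) (h : dd i φ (p.1.2, n, (none : Lt)) ∈ U) :
    ∃ K, ∀ k ≥ K, dd i φ (f p (word1 k), n + 1, (none : Lt)) ∈ U := by
  obtain ⟨K, hK⟩ := stepInl hU hif p h
  exact ⟨K, fun k hk => hU.1 _ _ (prodLe_dd_sq (Bsq_sq3 n k p)) (hK k hk)⟩

lemma toSnoc {U : Set (P1t × P2t i φ)} (hU : ScottOpen' (prodLe i φ f) U)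
    (hif : IFData i f) {n : ℕ} (p : Pairt) (s : NWord)
    (h : dd i φ (f p s, n, (none : Lt)) ∈ U) :
    ∃ K, ∀ k ≥ K, dd i φ (f p (wordSnoc s k), n, (none : Lt)) ∈ U := by
  obtain ⟨K, hK⟩ := stepInl hU hif p h
  exact ⟨K, fun k hk => hU.1 _ _ (prodLe_dd_sq (Bsq_sq4 n k p s)) (hK k hk)⟩

lemma toWord {U : Set (P1t × P2t i φ)} (hU : ScottOpen' (prodLe i φ f) U)
    (hif : IFData i f) {n : ℕ} (p : Pairt) (σ : ℕ → ℕ)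
    (h : dd i φ (p.1.1, n, (none : Lt)) ∈ U) :
    ∃ r, dd i φ (f p (pref σ r), n + 1, (none : Lt)) ∈ U := by
  obtain ⟨r, hr⟩ := stepInr hU hif p σ h
  exact ⟨r, hU.1 _ _ (prodLe_dd_sq (Bsq_sq2 n p (pref σ r))) hr⟩

lemma bump {U : Set (P1t × P2t i φ)} (hU : ScottOpen' (prodLe i φ f) U)
    (hif : IFData i f) {m n : ℕ} (h : dd i φ (m, n, (none : Lt)) ∈ U) :
    ∃ m', dd i φ (m', n + 1, (none : Lt)) ∈ U := by
  obtain ⟨r, hr⟩ := toWord hU hif ⟨(m, m + 1), by omega⟩ (fun _ => 0) h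
  exact ⟨_, hr⟩

lemma climb {U : Set (P1t × P2t i φ)} (hU : ScottOpen' (prodLe i φ f) U)
    (hif : IFData i f) {m n : ℕ} (t : ℕ) (h : dd i φ (m, n, (none : Lt)) ∈ U) :
    ∃ m', dd i φ (m', n + t, (none : Lt)) ∈ U := by
  induction t with
  | zero => exact ⟨m, h⟩
  | succ t ih =>
    obtain ⟨m', hm'⟩ := ih
    obtain ⟨m'', hm''⟩ := bump hU hif hm'
    exact ⟨m'', hm''⟩

/-- The adaptive word sequence: start with `word1 K0` and extend by the threshold letters. -/
def useq (K0 : ℕ) (T : NWord → ℕ) : ℕ → NWord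
  | 0 => word1 K0
  | j + 1 => wordSnoc (useq K0 T j) (T (useq K0 T j))

/-- The corresponding infinite letter sequence. -/
def sseq (K0 : ℕ) (T : NWord → ℕ) : ℕ → ℕ
  | 0 => K0
  | j + 1 => T (useq K0 T j)

lemma pref_sseq (K0 : ℕ) (T : NWord → ℕ) : ∀ r, pref (sseq K0 T) r = useq K0 T r := by
  intro r
  induction r with
  | zero => apply Subtype.ext; simp [pref, useq, word1, sseq, List.range_succ]
  | succ r ih =>
    apply Subtype.ext
    show (List.range (r + 2)).map (sseq K0 T) = (useq K0 T (r + 1)).1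
    rw [List.range_succ, List.map_append]
    have h1 : (List.range (r + 1)).map (sseq K0 T) = (useq K0 T r).1 :=
      congrArg Subtype.val ih
    rw [h1]
    rfl

lemma merge {U V : Set (P1t × P2t i φ)} (hU : ScottOpen' (prodLe i φ f) U)
    (hV : ScottOpen' (prodLe i φ f) V) (hif : IFData i f) {x y N : ℕ} (hxy : y < x)
    (hx : dd i φ (x, N, (none : Lt)) ∈ U) (hy : dd i φ (y, N, (none : Lt)) ∈ V) :
    ∃ z, z ∈ U ∧ z ∈ V ∧ z ∈ Adiag i φ f := by
  obtain ⟨K0, hK0⟩ := toInl hU hif ⟨(y, x), hxy⟩ hx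
  have hstep : ∀ w, dd i φ (f ⟨(y, x), hxy⟩ w, N + 1, (none : Lt)) ∈ U →
      ∃ K, ∀ k ≥ K, dd i φ (f ⟨(y, x), hxy⟩ (wordSnoc w k), N + 1, (none : Lt)) ∈ U :=
    fun w hw => toSnoc hU hif _ w hw
  choose! T hT using hstep
  have huW : ∀ j, dd i φ (f ⟨(y, x), hxy⟩ (useq K0 T j), N + 1, (none : Lt)) ∈ U := by
    intro j
    induction j with
    | zero => exact hK0 K0 le_rfl
    | succ j ih => exact hT _ ih (T (useq K0 T j)) le_rfl
  obtain ⟨r, hr⟩ := toWord hV hif ⟨(y, x), hxy⟩ (sseq K0 T) hy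
  rw [pref_sseq K0 T r] at hr
  exact ⟨dd i φ (f ⟨(y, x), hxy⟩ (useq K0 T r), N + 1, none), huW r, hr,
    ⟨_, none_mem_maxB _ _, prodLe_refl _⟩⟩

end AdiagAux

open AdiagAux in
/-- The set `A = ↓{(a, a) : a ∈ max B} ⊆ P₁ × P₂` is irreducible in the Scott
topology of the product poset `P₁ × P₂`: any two Scott open sets meeting `A` meet inside
`A`. -/
theorem Adiag_irreducible (i : Pairt → Set ℕ) (f : Pairt → NWord → ℕ)
    (φ : ℕ → Pairt) (hif : IFData i f) (hφ : Function.Bijective φ) :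
    ∀ U V : Set (P1t × P2t i φ), ScottOpen' (prodLe i φ f) U →
      ScottOpen' (prodLe i φ f) V → (U ∩ Adiag i φ f).Nonempty →
      (V ∩ Adiag i φ f).Nonempty → (U ∩ V ∩ Adiag i φ f).Nonempty := by
  intro U V hU hV hUA hVA
  obtain ⟨qU, hqUU, aU, haU, hleU⟩ := hUA
  obtain ⟨qV, hqVV, aV, haV, hleV⟩ := hVA
  have hU1 : dd i φ aU ∈ U := hU.1 _ _ hleU hqUU
  have hV1 : dd i φ aV ∈ V := hV.1 _ _ hleV hqVV
  obtain ⟨m1, n1, rfl⟩ := maxB_shape haU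
  obtain ⟨m2, n2, rfl⟩ := maxB_shape haV
  obtain ⟨x, hx⟩ := climb hU hif (max n1 n2 - n1) hU1
  obtain ⟨y, hy⟩ := climb hV hif (max n1 n2 - n2) hV1
  rw [Nat.add_sub_cancel' (le_max_left n1 n2)] at hx
  rw [Nat.add_sub_cancel' (le_max_right n1 n2)] at hy
  rcases lt_trichotomy x y with hlt | rfl | hlt
  · obtain ⟨z, hzV, hzU, hzA⟩ := merge hV hU hif hlt hy hx
    exact ⟨z, ⟨hzU, hzV⟩, hzA⟩
  · exact ⟨dd i φ (x, max n1 n2, none), ⟨hx, hy⟩,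
      ⟨_, none_mem_maxB x (max n1 n2), prodLe_refl _⟩⟩
  · obtain ⟨z, hzU, hzV, hzA⟩ := merge hU hV hif hlt hx hy
    exact ⟨z, ⟨hzU, hzV⟩, hzA⟩
end

section
/- Let L and P be countable dcpo's and let U, V be Scott open sets of L and P respectively, with enumerations U = {xₙ : n ∈ ℕ} and V = {yₙ : n ∈ ℕ}. For each n ∈ ℕ let 𝒰ₙ = {W ∈ σ(L) : {xᵢ : i ≤ n} ⊆ W} and 𝒱ₙ = {W ∈ σ(P) : {yᵢ : i ≤ n} ⊆ W}. If 𝒰 is a Scott open subset of the product lattice σ(L) × σ(P) containing (U,V), then there exists n ∈ ℕ with 𝒰ₙ × 𝒱ₙ ⊆ 𝒰. -/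
/-- A poset is a dcpo if every nonempty directed subset has a least upper bound. -/
def IsDcpo (α : Type*) [Preorder α] : Prop :=
  ∀ D : Set α, D.Nonempty → DirectedOn (· ≤ ·) D → ∃ u, IsLUB D u

/-- A subset of a poset is Scott open if it is an upper set which is inaccessible by
suprema of directed sets. -/
def IsScottOpen {α : Type*} [Preorder α] (U : Set α) : Prop :=
  IsUpperSet U ∧ DirSupInacc U

/-- `σ(L)`: the poset (complete lattice) of Scott open subsets of `L`, ordered by
inclusion. -/
abbrev sigmaScott (α : Type*) [Preorder α] : Type _ := {U : Set α // IsScottOpen U}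

/-!
If no `n` works, pick `(Aₙ, Bₙ) ∉ 𝒰` with `x₀, …, xₙ ∈ Aₙ` and `y₀, …, yₙ ∈ Bₙ`. The sets
`Rₖ = U ∩ ⋂_{j ≥ k} Aⱼ` are Scott open: a directed set with supremum in `Rₖ` reaches some
`xᵢ ∈ U`, above which every `Aⱼ` with `j ≥ i` holds, and the finitely many `Aⱼ` with `k ≤ j < i`
are handled together since their intersection is Scott open. The `Rₖ` increase with union `U`,
and similarly `Sₖ` to `V`, so the chain `(Rₖ, Sₖ)` has supremum `(U, V) ∈ 𝒰`. By Scott openness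
some `(Rₖ, Sₖ) ∈ 𝒰`, hence its upper bound `(Aₖ, Bₖ) ∈ 𝒰`, a contradiction.
-/

open Set

namespace IsScottOpen

variable {α : Type*} [Preorder α]

lemma inter {A B : Set α} (hA : IsScottOpen A) (hB : IsScottOpen B) : IsScottOpen (A ∩ B) :=
  ⟨hA.1.inter hB.1, hA.2.inter hB.2⟩

lemma univ : IsScottOpen (Set.univ : Set α) :=
  ⟨isUpperSet_univ, DirSupInacc.univ⟩

lemma biInter_finset {ι : Type*} (s : Finset ι) {M : ι → Set α}
    (hM : ∀ i ∈ s, IsScottOpen (M i)) : IsScottOpen (⋂ i ∈ s, M i) := by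
  classical
  induction s using Finset.induction_on with
  | empty => simpa using IsScottOpen.univ
  | insert i s _ ih =>
    rw [Finset.set_biInter_insert]
    exact (hM i (s.mem_insert_self i)).inter (ih fun j hj => hM j (Finset.mem_insert_of_mem hj))

lemma inter_biInter_ge {U : Set α} (hU : IsScottOpen U) {x : ℕ → α} (hUx : U ⊆ range x)
    {M : ℕ → Set α} (hM : ∀ j, IsScottOpen (M j)) (hxM : ∀ i j, i ≤ j → x i ∈ M j) (k : ℕ) :
    IsScottOpen (U ∩ ⋂ j ≥ k, M j) := by
  refine ⟨hU.1.inter (isUpperSet_iInter₂ fun j _ => (hM j).1), ?_⟩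
  intro D hne hdir a hlub ha
  obtain ⟨d, hdD, hdU⟩ := hU.2 hne hdir hlub ha.1
  obtain ⟨i, rfl⟩ := hUx hdU
  have hfin : IsScottOpen (⋂ j ∈ Finset.Ico k i, M j) :=
    biInter_finset _ fun j _ => hM j
  obtain ⟨e, heD, heM⟩ := hfin.2 hne hdir hlub <|
    mem_iInter₂.2 fun j hj => mem_iInter₂.1 ha.2 j (Finset.mem_Ico.1 hj).1
  obtain ⟨c, hcD, hdc, hec⟩ := hdir _ hdD e heD
  refine ⟨c, hcD, hU.1 hdc hdU, mem_iInter₂.2 fun j hkj => ?_⟩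
  rcases lt_or_ge j i with hji | hij
  · exact (hM j).1 hec (mem_iInter₂.1 heM j (Finset.mem_Ico.2 ⟨hkj, hji⟩))
  · exact (hM j).1 hdc (hxM i j hij)

end IsScottOpen

namespace sigmaScott

variable {α : Type*} [Preorder α]

lemma isLUB_range_of_iUnion_eq {ι : Type*} {f : ι → sigmaScott α} {U : sigmaScott α}
    (h : ⋃ i, (f i).1 = U.1) : IsLUB (range f) U := by
  refine ⟨?_, fun W hW => ?_⟩
  · rintro _ ⟨i, rfl⟩
    exact (subset_iUnion (fun i => (f i).1) i).trans h.le
  · exact h.ge.trans (iUnion_subset fun i => hW ⟨i, rfl⟩)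

lemma exists_monotone_isLUB_le (U : sigmaScott α) (x : ℕ → α) (hx : U.1 = range x)
    (W : ℕ → sigmaScott α) (hW : ∀ j, ∀ i ≤ j, x i ∈ (W j).1) :
    ∃ R : ℕ → sigmaScott α, Monotone R ∧ IsLUB (range R) U ∧ ∀ k, R k ≤ W k := by
  let R : ℕ → sigmaScott α := fun k =>
    ⟨U.1 ∩ ⋂ j ≥ k, (W j).1,
      U.2.inter_biInter_ge hx.subset (fun j => (W j).2) (fun i j hij => hW j i hij) k⟩
  refine ⟨R, fun k l hkl => ?_, isLUB_range_of_iUnion_eq ?_, fun k => ?_⟩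
  · exact inter_subset_inter_right _ (biInter_mono (fun j (hlj : l ≤ j) => hkl.trans hlj)
      fun _ _ => subset_rfl)
  · refine (iUnion_subset fun k => inter_subset_left).antisymm fun u hu => ?_
    obtain ⟨i, rfl⟩ := hx.subset hu
    exact mem_iUnion.2 ⟨i, hu, mem_iInter₂.2 fun j hij => hW j i hij⟩
  · exact fun _ hu => mem_iInter₂.1 hu.2 k le_rfl

end sigmaScott

theorem exists_basic_open_subset_of_scottOpen_in_product_of_scott_lattices_general
    (L P : Type) [PartialOrder L] [PartialOrder P]
    (U : sigmaScott L) (V : sigmaScott P) (x : ℕ → L) (y : ℕ → P)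
    (hx : U.1 = Set.range x) (hy : V.1 = Set.range y)
    (𝒰 : Set (sigmaScott L × sigmaScott P)) (h𝒰 : IsScottOpen 𝒰) (hUV : (U, V) ∈ 𝒰) :
    ∃ n : ℕ,
      ({W : sigmaScott L | ∀ i ≤ n, x i ∈ W.1} ×ˢ {W : sigmaScott P | ∀ i ≤ n, y i ∈ W.1})
        ⊆ 𝒰 := by
  by_contra! h
  choose p hp hp𝒰 using fun n => not_subset.1 (h n)
  obtain ⟨R, hR, hRU, hRp⟩ :=
    sigmaScott.exists_monotone_isLUB_le U x hx (fun n => (p n).1) fun n => (hp n).1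
  obtain ⟨S, hS, hSV, hSp⟩ :=
    sigmaScott.exists_monotone_isLUB_le V y hy (fun n => (p n).2) fun n => (hp n).2
  have hlub : IsLUB (range fun k => (R k, S k)) (U, V) := by
    rw [isLUB_prod, ← range_comp, ← range_comp]
    exact ⟨hRU, hSV⟩
  obtain ⟨_, ⟨k, rfl⟩, hk⟩ :=
    h𝒰.2 (range_nonempty _) (hR.prodMk hS).directed_le.directedOn_range hlub hUV
  exact hp𝒰 k (h𝒰.1 ⟨hRp k, hSp k⟩ hk)

/-- Let `L`, `P` be countable dcpo's, `U ∈ σ(L)`, `V ∈ σ(P)` with enumerations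
`U = {xₙ : n ∈ ℕ}` and `V = {yₙ : n ∈ ℕ}`, and for `n ∈ ℕ` let
`𝒰ₙ = {W ∈ σ(L) : {xᵢ : i ≤ n} ⊆ W}` and `𝒱ₙ = {W ∈ σ(P) : {yᵢ : i ≤ n} ⊆ W}`.
If `𝒰` is a Scott open subset of the product poset `σ(L) × σ(P)` containing `(U, V)`, then
`𝒰ₙ ×ˢ 𝒱ₙ ⊆ 𝒰` for some `n`. -/
theorem exists_basic_open_subset_of_scottOpen_in_product_of_scott_lattices
    (L P : Type) [PartialOrder L] [PartialOrder P] [Countable L] [Countable P]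
    (hL : IsDcpo L) (hP : IsDcpo P)
    (U : sigmaScott L) (V : sigmaScott P) (x : ℕ → L) (y : ℕ → P)
    (hx : U.1 = Set.range x) (hy : V.1 = Set.range y)
    (𝒰 : Set (sigmaScott L × sigmaScott P)) (h𝒰 : IsScottOpen 𝒰) (hUV : (U, V) ∈ 𝒰) :
    ∃ n : ℕ,
      ({W : sigmaScott L | ∀ i ≤ n, x i ∈ W.1} ×ˢ {W : sigmaScott P | ∀ i ≤ n, y i ∈ W.1})
        ⊆ 𝒰 :=
  exists_basic_open_subset_of_scottOpen_in_product_of_scott_lattices_general L P U V x y hx hy 𝒰 h𝒰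
    hUV
end
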